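/- Let Φ ∈ ℂ^{M×N} with columns of equal norm √κ and coherence parameter μ. Suppose f ∈ ℂ^N is s-sparse and the measurement is g = Φf + e. If μ(2s−1) + 2‖e‖₂/(√κ f_min) < 1, where f_min = min over the support of |f_k|, then the index selected at the first step of OMP, argmax_i |⟨g, Φ_i⟩|, lies in the support of f. -/

import Mathlib

set_option maxHeartbeats 1000000


open Finset

theorem omp_first_step_in_support
    (M N : ℕ) (Φ : Matrix (Fin M) (Fin N) ℂ)
    (κ : ℝ) (hκ : 0 < κ)
    (hnorm : ∀ k, ∑ j, ‖Φ j k‖ ^ 2 = κ)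
    (μ : ℝ)
    (hμ : ∀ k l, k ≠ l → ‖∑ j, (starRingEnd ℂ) (Φ j k) * Φ j l‖ ≤ μ * κ)
    (s : ℕ) (f : Fin N → ℂ)
    (hs : (Finset.univ.filter fun k => f k ≠ 0).card ≤ s)
    (hfne : ∃ k, f k ≠ 0)
    (e g : Fin M → ℂ)
    (hg : ∀ j, g j = (∑ k, Φ j k * f k) + e j)
    (fmin : ℝ) (hfminpos : 0 < fmin)
    (hfmin : ∀ k, f k ≠ 0 → fmin ≤ ‖f k‖)
    (hcond : μ * (2 * s - 1)
        + 2 * Real.sqrt (∑ j, ‖e j‖ ^ 2) / (Real.sqrt κ * fmin) < 1) :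
    ∀ i : Fin N,
      (∀ l : Fin N, ‖∑ j, (starRingEnd ℂ) (Φ j l) * g j‖
          ≤ ‖∑ j, (starRingEnd ℂ) (Φ j i) * g j‖) →
      f i ≠ 0 := by
  classical
  intro i hi
  by_contra hfi'
  obtain ⟨k1, hk1⟩ := hfne
  have hik1 : i ≠ k1 := by rintro rfl; exact hk1 hfi'
  -- μ ≥ 0
  have hμκ : 0 ≤ μ * κ := le_trans (norm_nonneg _) (hμ i k1 hik1)
  have hμ0 : 0 ≤ μ := (mul_nonneg_iff_of_pos_right hκ).mp hμκ
  -- notation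
  set ε : ℝ := Real.sqrt (∑ j, ‖e j‖ ^ 2) with hε
  have hε0 : 0 ≤ ε := Real.sqrt_nonneg _
  have hrκ : 0 < Real.sqrt κ := Real.sqrt_pos.mpr hκ
  have hrκsq : Real.sqrt κ * Real.sqrt κ = κ := Real.mul_self_sqrt hκ.le
  set S : Finset (Fin N) := Finset.univ.filter (fun k => f k ≠ 0) with hS
  have hk1S : k1 ∈ S := by simp [hS, hk1]
  obtain ⟨k0, hk0S, hk0max⟩ := S.exists_max_image (fun k => ‖f k‖) ⟨k1, hk1S⟩
  have hfk0 : f k0 ≠ 0 := by simpa [hS] using hk0S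
  set A : ℝ := ‖f k0‖ with hA
  have hAfmin : fmin ≤ A := hfmin k0 hfk0
  have hA0 : 0 < A := lt_of_lt_of_le hfminpos hAfmin
  have hiS : i ∉ S := by simp [hS, hfi']
  -- expansion of correlations
  have hc : ∀ l, (∑ j, (starRingEnd ℂ) (Φ j l) * g j)
      = (∑ k, (∑ j, (starRingEnd ℂ) (Φ j l) * Φ j k) * f k)
        + ∑ j, (starRingEnd ℂ) (Φ j l) * e j := by
    intro l
    simp only [hg, mul_add, Finset.sum_add_distrib, Finset.mul_sum]
    congr 1
    rw [Finset.sum_comm]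
    simp [Finset.sum_mul, mul_assoc]
  -- restrict sum to the support
  have hsupp : ∀ l, (∑ k, (∑ j, (starRingEnd ℂ) (Φ j l) * Φ j k) * f k)
      = ∑ k ∈ S, (∑ j, (starRingEnd ℂ) (Φ j l) * Φ j k) * f k := by
    intro l
    exact (Finset.sum_filter_of_ne (fun k _ h => by
      intro hfk; apply h; rw [hfk, mul_zero])).symm
  -- diagonal entries
  have hdiag : ∀ l, (∑ j, (starRingEnd ℂ) (Φ j l) * Φ j l) = (κ : ℂ) := by
    intro l
    have : ∀ j, (starRingEnd ℂ) (Φ j l) * Φ j l = ((‖Φ j l‖ ^ 2 : ℝ) : ℂ) := by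
      intro j
      rw [mul_comm, Complex.mul_conj']
      push_cast
      ring
    rw [Finset.sum_congr rfl (fun j _ => this j), ← Complex.ofReal_sum, hnorm]
  -- noise bound via Cauchy-Schwarz
  have hE : ∀ l, ‖∑ j, (starRingEnd ℂ) (Φ j l) * e j‖ ≤ Real.sqrt κ * ε := by
    intro l
    calc ‖∑ j, (starRingEnd ℂ) (Φ j l) * e j‖
        ≤ ∑ j, ‖Φ j l‖ * ‖e j‖ := by
          refine (norm_sum_le _ _).trans (le_of_eq ?_)
          simp [norm_mul]
      _ ≤ Real.sqrt κ * ε := by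
          have hcs := Finset.sum_mul_sq_le_sq_mul_sq Finset.univ
            (fun j => ‖Φ j l‖) (fun j => ‖e j‖)
          have h1 : 0 ≤ ∑ j, ‖Φ j l‖ * ‖e j‖ :=
            Finset.sum_nonneg fun j _ => mul_nonneg (norm_nonneg _) (norm_nonneg _)
          have h2 : (∑ j, ‖Φ j l‖ * ‖e j‖) ^ 2 ≤ κ * (∑ j, ‖e j‖ ^ 2) := by
            rw [← hnorm l]; exact hcs
          have h3 := Real.sqrt_le_sqrt h2
          rw [Real.sqrt_sq h1] at h3
          rw [Real.sqrt_mul hκ.le] at h3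
          rw [hε]
          exact h3
  -- sum of |f| over support
  set B : ℝ := ∑ k ∈ S, ‖f k‖ with hB
  have hBle : B ≤ (s : ℝ) * A := by
    calc B ≤ ∑ _k ∈ S, A := Finset.sum_le_sum (fun k hk => hk0max k hk)
      _ = (S.card : ℝ) * A := by rw [Finset.sum_const, nsmul_eq_mul]
      _ ≤ (s : ℝ) * A := by
          apply mul_le_mul_of_nonneg_right _ hA0.le
          exact_mod_cast hs
  -- upper bound for index i
  have hupper : ‖∑ j, (starRingEnd ℂ) (Φ j i) * g j‖ ≤ μ * κ * B + Real.sqrt κ * ε := by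
    rw [hc i, hsupp i]
    refine (norm_add_le _ _).trans ?_
    refine add_le_add ?_ (hE i)
    refine (norm_sum_le _ _).trans ?_
    rw [hB, Finset.mul_sum]
    refine Finset.sum_le_sum (fun k hk => ?_)
    rw [norm_mul]
    have hki : i ≠ k := by rintro rfl; exact hiS hk
    exact mul_le_mul_of_nonneg_right (hμ i k hki) (norm_nonneg _)
  -- lower bound for index k0
  have hlower : κ * A - μ * κ * (B - A) - Real.sqrt κ * ε
      ≤ ‖∑ j, (starRingEnd ℂ) (Φ j k0) * g j‖ := by
    rw [hc k0, hsupp k0]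
    rw [← Finset.sum_erase_add S _ hk0S, hdiag k0]
    set T : ℂ := ∑ k ∈ S.erase k0, (∑ j, (starRingEnd ℂ) (Φ j k0) * Φ j k) * f k with hT
    set E : ℂ := ∑ j, (starRingEnd ℂ) (Φ j k0) * e j with hEd
    have hTbd : ‖T‖ ≤ μ * κ * (B - A) := by
      have hBA : ∑ k ∈ S.erase k0, ‖f k‖ = B - A := by
        have := Finset.sum_erase_add S (fun k => ‖f k‖) hk0S
        rw [hB, hA]; linarith [this]
      calc ‖T‖ ≤ ∑ k ∈ S.erase k0, ‖(∑ j, (starRingEnd ℂ) (Φ j k0) * Φ j k) * f k‖ :=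
            norm_sum_le _ _
        _ ≤ ∑ k ∈ S.erase k0, μ * κ * ‖f k‖ := by
            refine Finset.sum_le_sum (fun k hk => ?_)
            rw [norm_mul]
            have hkk0 : k0 ≠ k := fun h => (Finset.mem_erase.mp hk).1 h.symm
            exact mul_le_mul_of_nonneg_right (hμ k0 k hkk0) (norm_nonneg _)
        _ = μ * κ * (B - A) := by rw [← Finset.mul_sum, hBA]
    have hnormκf : ‖(κ : ℂ) * f k0‖ = κ * A := by
      rw [norm_mul, Complex.norm_real, Real.norm_of_nonneg hκ.le]
    have key : ‖(κ : ℂ) * f k0‖ ≤ ‖T + (κ : ℂ) * f k0 + E‖ + (‖T‖ + ‖E‖) := by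
      have : (κ : ℂ) * f k0 = (T + (κ : ℂ) * f k0 + E) - (T + E) := by ring
      calc ‖(κ : ℂ) * f k0‖ = ‖(T + (κ : ℂ) * f k0 + E) - (T + E)‖ := by rw [← this]
        _ ≤ ‖T + (κ : ℂ) * f k0 + E‖ + ‖T + E‖ := norm_sub_le _ _
        _ ≤ ‖T + (κ : ℂ) * f k0 + E‖ + (‖T‖ + ‖E‖) := by
            exact add_le_add le_rfl (norm_add_le T E)
    rw [hnormκf] at key
    have := hE k0
    rw [← hEd] at this
    linarith [key, hTbd, this]
  -- combine
  have hcomb := le_trans hlower (le_trans (hi k0) hupper)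
  -- from hcond : μ*(2s-1) + 2ε/(√κ fmin) < 1
  have hfrac : 2 * ε < (1 - μ * (2 * s - 1)) * (Real.sqrt κ * fmin) := by
    have hden : 0 < Real.sqrt κ * fmin := mul_pos hrκ hfminpos
    have : 2 * ε / (Real.sqrt κ * fmin) < 1 - μ * (2 * s - 1) := by linarith
    calc 2 * ε = (2 * ε / (Real.sqrt κ * fmin)) * (Real.sqrt κ * fmin) := by
          field_simp
      _ < (1 - μ * (2 * s - 1)) * (Real.sqrt κ * fmin) :=
          mul_lt_mul_of_pos_right this hden
  have hμs1 : 0 < 1 - μ * (2 * s - 1) := by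
    have hden : 0 < Real.sqrt κ * fmin := mul_pos hrκ hfminpos
    have : 0 ≤ 2 * ε / (Real.sqrt κ * fmin) := div_nonneg (by linarith) hden.le
    linarith
  -- final contradiction
  -- hcomb : κ*A - μ*κ*(B-A) - √κ*ε ≤ μ*κ*B + √κ*ε
  -- i.e. κ*A ≤ μ*κ*(2B - A) + 2√κ*ε ≤ μ*κ*A*(2s-1) + 2√κ*ε
  have h1 : κ * A ≤ μ * κ * A * (2 * s - 1) + 2 * (Real.sqrt κ * ε) := by
    linarith [hcomb, mul_le_mul_of_nonneg_left hBle hμκ]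
  have h2 : 2 * (Real.sqrt κ * ε) < (1 - μ * (2 * s - 1)) * (κ * fmin) := by
    have := mul_lt_mul_of_pos_left hfrac hrκ
    calc 2 * (Real.sqrt κ * ε) = Real.sqrt κ * (2 * ε) := by ring
      _ < Real.sqrt κ * ((1 - μ * (2 * s - 1)) * (Real.sqrt κ * fmin)) := this
      _ = (1 - μ * (2 * s - 1)) * (Real.sqrt κ * Real.sqrt κ * fmin) := by ring
      _ = (1 - μ * (2 * s - 1)) * (κ * fmin) := by rw [hrκsq]
  linarith [h1, h2, mul_le_mul_of_nonneg_left hAfmin (mul_nonneg hμs1.le hκ.le)]
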